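/- arXiv:2308.16457 — 2 statements merged into one kernel-verified Lean document; each statement's English description precedes it below -/
import Mathlib

section
/- Let n ≥ 2 and π ∈ ℒⁿ. Then the set 𝒮^π = {s⁰(π), s¹(π), …, s^{n−1}(π)} of stack-sorting iterates of π, regarded as n points in ℝⁿ (each permutation σ identified with the point (σ₁,…,σₙ)), is affinely independent in ℝⁿ. -/
open scoped Pointwise

/-- One pass of the stack-sorting algorithm: `ssAux stack input`, where
`stack` holds the current stack contents, top first.  If the next input
entry exceeds the top of the stack, the top is popped to the output;
otherwise the entry is pushed; at the end the stack is popped entirely. -/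
def ssAux : List ℕ → List ℕ → List ℕ
  | stack, [] => stack
  | [], x :: xs => ssAux [x] xs
  | t :: ts, x :: xs =>
    if t < x then t :: ssAux ts (x :: xs) else ssAux (x :: t :: ts) xs
termination_by stack inp => stack.length + 2 * inp.length

/-- The stack-sorting map `s`: one pass of the stack-sorting algorithm. -/
def stackSort (l : List ℕ) : List ℕ := ssAux [] l

/-- A list of naturals, viewed as a point of `ℝⁿ`. -/
def toPoint (n : ℕ) (l : List ℕ) : Fin n → ℝ := fun i => (l.getD i 0 : ℝ)

lemma ssAux_perm : ∀ stack l : List ℕ, (ssAux stack l).Perm (stack ++ l) := by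
  intro stack l
  induction stack, l using ssAux.induct with
  | case1 s => simp [ssAux]
  | case2 x xs ih => simpa [ssAux] using ih
  | case3 t ts x xs h ih =>
      simp only [ssAux, if_pos h]
      exact (ih.cons t)
  | case4 t ts x xs h ih =>
      simp only [ssAux, if_neg h]
      refine ih.trans ?_
      simpa using (List.perm_middle (a := x) (l₁ := t :: ts) (l₂ := xs)).symm

lemma ssAux_split : ∀ (stack X : List ℕ), ∀ (x : ℕ) (xs : List ℕ),
    (∀ y ∈ stack, y < x) → (∀ y ∈ X, y < x) →
    ssAux stack (X ++ x :: xs) = ssAux stack X ++ ssAux [x] xs := by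
  intro stack X
  induction stack, X using ssAux.induct with
  | case1 s =>
      intro x xs hs _
      induction s with
      | nil => simp [ssAux]
      | cons t ts ihs =>
          have ht : t < x := hs t (by simp)
          simp only [List.nil_append] at ihs
          simp only [List.nil_append, ssAux, if_pos ht]
          rw [ihs (fun y hy => hs y (by simp [hy]))]
          simp [ssAux]
  | case2 a as ih =>
      intro x xs hs hX
      simp only [List.cons_append, ssAux]
      exact ih x xs (by simpa using hX a (by simp)) (fun y hy => hX y (by simp [hy]))
  | case3 t ts a as h ih =>
      intro x xs hs hX
      simp only [List.cons_append] at ih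
      simp only [List.cons_append, ssAux, if_pos h]
      rw [ih x xs (fun y hy => hs y (by simp [hy])) hX]
  | case4 t ts a as h ih =>
      intro x xs hs hX
      simp only [List.cons_append, ssAux, if_neg h]
      exact ih x xs (by
        intro y hy
        rcases List.mem_cons.1 hy with rfl | hy
        · exact hX y (by simp)
        · exact hs y hy) (fun y hy => hX y (by simp [hy]))

lemma ssAux_bottom : ∀ (stack C : List ℕ), ∀ (x : ℕ), (∀ y ∈ C, y < x) →
    ssAux (stack ++ [x]) C = ssAux stack C ++ [x] := by
  intro stack C
  induction stack, C using ssAux.induct with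
  | case1 s => intro x _; simp [ssAux]
  | case2 c cs ih =>
      intro x hC
      have : ¬ x < c := by have := hC c (by simp); omega
      simp only [List.nil_append, ssAux, if_neg this]
      exact ih x (fun y hy => hC y (by simp [hy]))
  | case3 t ts c cs h ih =>
      intro x hC
      simp only [List.cons_append, ssAux, if_pos h]
      rw [ih x hC]
  | case4 t ts c cs h ih =>
      intro x hC
      simp only [List.cons_append, ssAux, if_neg h]
      exact ih x (fun y hy => hC y (by simp [hy]))

lemma ssAux_range' : ∀ (k t : ℕ), ssAux [t] (List.range' (t+1) k) = List.range' t (k+1) := by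
  intro k
  induction k with
  | zero => intro t; simp [ssAux]
  | succ k ih =>
      intro t
      have h1 : ssAux [t] (List.range' (t+1) (k+1)) = t :: ssAux [t+1] (List.range' (t+1+1) k) := by
        rw [List.range'_succ]
        simp [ssAux, Nat.lt_succ_self]
      rw [h1, ih (t+1)]; simp [List.range'_succ]

lemma stackSort_split (B C : List ℕ) (x : ℕ) (hB : ∀ y ∈ B, y < x) (hC : ∀ y ∈ C, y < x) :
    stackSort (B ++ x :: C) = stackSort B ++ stackSort C ++ [x] := by
  unfold stackSort
  rw [ssAux_split [] B x C (by simp) hB]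
  have := ssAux_bottom [] C x hC
  simp only [List.nil_append] at this
  rw [this, List.append_assoc]

lemma stackSort_append_range' (X : List ℕ) (r k : ℕ) (hX : ∀ y ∈ X, y < r) :
    stackSort (X ++ List.range' r k) = stackSort X ++ List.range' r k := by
  cases k with
  | zero => simp
  | succ k =>
      rw [List.range'_succ]
      unfold stackSort
      rw [ssAux_split [] X r _ (by simp) hX, ssAux_range' k r, List.range'_succ]

lemma iter_structure (n : ℕ) (hn : 2 ≤ n) (L : List ℕ)
    (hL : L.Perm (List.range' 2 (n - 2))) :
    ∀ i, i ≤ n - 2 →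
      ∃ B : List ℕ, B.Perm (List.range' 2 (n - i - 2)) ∧
        stackSort^[i] (L ++ [n, 1]) = B ++ [n - i, 1] ++ List.range' (n - i + 1) i := by
  intro i
  induction i with
  | zero => intro _; exact ⟨L, by simpa using hL, by simp⟩
  | succ i ih =>
      intro hi
      obtain ⟨B, hBp, hB⟩ := ih (le_trans (Nat.le_succ i) hi)
      have hni : 3 ≤ n - i := by omega
      have hmemB : ∀ y ∈ B, 2 ≤ y ∧ y < n - i := by
        intro y hy
        have := hBp.mem_iff.1 hy
        rw [List.mem_range'_1] at this
        omega
      -- n - i - 1 ∈ B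
      have hmax : (n - i - 1) ∈ B := by
        rw [hBp.mem_iff, List.mem_range'_1]; omega
      obtain ⟨B1, B2, hB12⟩ := List.append_of_mem hmax
      have hnd : B.Nodup := hBp.nodup_iff.2 (by apply List.nodup_range' <;> norm_num)
      rw [hB12, List.nodup_append] at hnd
      have hB1 : ∀ y ∈ B1, y < n - i - 1 := by
        intro y hy
        have h1 := (hmemB y (by rw [hB12]; simp [hy])).2
        have h2 : y ≠ n - i - 1 := by
          intro h; subst h; exact hnd.2.2 _ hy _ (by simp) rfl
        omega
      have hB2 : ∀ y ∈ B2, y < n - i - 1 := by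
        intro y hy
        have h1 := (hmemB y (by rw [hB12]; simp [hy])).2
        have h2 : y ≠ n - i - 1 := by
          intro h; subst h; exact (List.nodup_cons.1 hnd.2.1).1 hy
        omega
      refine ⟨stackSort B1 ++ stackSort B2, ?_, ?_⟩
      · have p1 : (stackSort B1 ++ stackSort B2).Perm (B1 ++ B2) :=
          ((ssAux_perm [] B1).append (ssAux_perm [] B2)).trans (by simp)
        have p2 : ((n - i - 1) :: (B1 ++ B2)).Perm ((n-i-1) :: List.range' 2 (n - (i+1) - 2)) := by
          refine (List.perm_middle.symm.trans ?_)
          rw [← hB12]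
          refine hBp.trans ?_
          have : List.range' 2 (n - i - 2) = List.range' 2 (n - (i+1) - 2) ++ [n - i - 1] := by
            have h3 : n - i - 2 = (n - (i+1) - 2) + 1 := by omega
            rw [h3, List.range'_concat]
            congr 2
            omega
          rw [this]
          exact List.perm_append_singleton _ _
        exact p1.trans ((List.Perm.cons_inv p2))
      · rw [Function.iterate_succ_apply', hB]
        rw [stackSort_append_range' _ _ _ (by
          intro y hy
          simp only [List.mem_append, List.mem_cons] at hy
          rcases hy with hy | hy
          · have := (hmemB y hy).2; omega
          · rcases hy with rfl | hy
            · omega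
            · simp at hy; omega)]
        have hsplit1 : stackSort (B ++ [n - i, 1]) = stackSort B ++ stackSort [1] ++ [n - i] := by
          have : B ++ [n - i, 1] = B ++ (n - i) :: [1] := rfl
          rw [this, stackSort_split B [1] (n - i) (fun y hy => (hmemB y hy).2) (by simp; omega)]
        have hs1 : stackSort [1] = [1] := by simp [stackSort, ssAux]
        have hsplitB : stackSort B = stackSort B1 ++ stackSort B2 ++ [n - i - 1] := by
          rw [hB12, stackSort_split B1 B2 (n - i - 1) hB1 hB2]
        rw [hsplit1, hs1, hsplitB]
        have e1 : n - (i+1) = n - i - 1 := by omega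
        rw [e1]
        have e2 : n - i - 1 + 1 = n - i := by omega
        rw [e2, List.range'_succ]
        simp

lemma iter_last (n : ℕ) (hn : 2 ≤ n) (L : List ℕ)
    (hL : L.Perm (List.range' 2 (n - 2))) :
    stackSort^[n-1] (L ++ [n, 1]) = List.range' 1 n := by
  obtain ⟨B, hBp, hB⟩ := iter_structure n hn L hL (n-2) le_rfl
  have hB0 : B = [] := by
    have : n - (n-2) - 2 = 0 := by omega
    rw [this] at hBp
    exact hBp.eq_nil
  have e1 : n - (n - 2) = 2 := by omega
  rw [hB0, e1] at hB
  have hstep : n - 1 = (n - 2) + 1 := by omega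
  rw [hstep, Function.iterate_succ_apply', hB]
  rw [show ([] : List ℕ) ++ [2,1] ++ List.range' (2+1) (n-2) = [2,1] ++ List.range' 3 (n-2) by norm_num]
  rw [stackSort_append_range' [2, 1] 3 (n-2) (by intro y hy; simp at hy; omega)]
  have hs21 : stackSort [2, 1] = [1, 2] := by simp [stackSort, ssAux]
  rw [hs21]
  have : List.range' 1 n = 1 :: 2 :: List.range' 3 (n-2) := by
    conv_lhs => rw [show n = (n-2) + 1 + 1 by omega]
    rw [List.range'_succ, List.range'_succ]
  rw [this]
  rfl

lemma coord_self (n : ℕ) (hn : 2 ≤ n) (L : List ℕ) (hL : L.Perm (List.range' 2 (n - 2)))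
    (k : ℕ) (hk : k < n - 1) :
    (stackSort^[k] (L ++ [n, 1])).getD (n - 1 - k) 0 = 1 := by
  obtain ⟨B, hBp, hB⟩ := iter_structure n hn L hL k (by omega)
  have hBl : B.length = n - k - 2 := by
    rw [hBp.length_eq, List.length_range']
  rw [hB, List.append_assoc,
    List.getD_append_right _ _ _ _ (by rw [hBl]; omega)]
  rw [hBl, show n - 1 - k - (n - k - 2) = 0 + 1 from by omega]
  simp only [List.cons_append, List.getD_cons_succ, List.getD_cons_zero]

lemma coord_later (n : ℕ) (hn : 2 ≤ n) (L : List ℕ) (hL : L.Perm (List.range' 2 (n - 2)))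
    (k i : ℕ) (hki : k < i) (hi : i ≤ n - 1) :
    (stackSort^[i] (L ++ [n, 1])).getD (n - 1 - k) 0 = n - k := by
  by_cases hi2 : i ≤ n - 2
  · obtain ⟨B, hBp, hB⟩ := iter_structure n hn L hL i hi2
    have hBl : B.length = n - i - 2 := by
      rw [hBp.length_eq, List.length_range']
    rw [hB, List.append_assoc,
      List.getD_append_right _ _ _ _ (by rw [hBl]; omega)]
    rw [hBl, show n - 1 - k - (n - i - 2) = (i - 1 - k) + 1 + 1 from by omega]
    simp only [List.cons_append, List.nil_append, List.getD_cons_succ]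
    rw [List.getD_eq_getElem _ _ (by simpa using by omega : i - 1 - k < (List.range' (n - i + 1) i).length),
      List.getElem_range']
    omega
  · have hieq : i = n - 1 := by omega
    rw [hieq, iter_last n hn L hL]
    rw [List.getD_eq_getElem _ _ (by simpa using by omega : n - 1 - k < (List.range' 1 n).length),
      List.getElem_range']
    omega

/-- Let `n ≥ 2` and `π = L ++ [n, 1] ∈ ℒⁿ`, where `L` is a
permutation of `{2, …, n-1}`.  Then the `n` stack-sorting iterates
`s⁰(π), s¹(π), …, s^{n-1}(π)`, regarded as points of `ℝⁿ`, are affinely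
independent. -/
theorem ssIterates_affineIndependent (n : ℕ) (hn : 2 ≤ n) (L : List ℕ)
    (hL : L.Perm (List.range' 2 (n - 2))) :
    AffineIndependent ℝ
      (fun i : Fin n => toPoint n (stackSort^[(i : ℕ)] (L ++ [n, 1]))) := by
  rw [affineIndependent_iff_of_fintype]
  intro w hw hvsub
  rw [Finset.weightedVSub_eq_linear_combination _ hw] at hvsub
  have key : ∀ k : ℕ, ∀ (hkn : k < n), k < n - 1 → w ⟨k, hkn⟩ = 0 := by
    intro k
    induction k using Nat.strong_induction_on with
    | _ k ih =>
      intro hkn hk1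
      have hc : n - 1 - k < n := by omega
      have h0 := congrFun hvsub ⟨n - 1 - k, hc⟩
      simp only [Finset.sum_apply, Pi.smul_apply, smul_eq_mul, Pi.zero_apply] at h0
      set C : ℝ := ((n - k : ℕ) : ℝ) with hC
      set bk : Fin n := ⟨k, hkn⟩ with hbk
      have hterm : ∀ i : Fin n,
          w i * toPoint n (stackSort^[(i : ℕ)] (L ++ [n, 1])) ⟨n - 1 - k, hc⟩
          = w i * C + (if i = bk then w i * (1 - C) else 0) := by
        intro i
        by_cases hik : i = bk
        · subst hik
          have hv : toPoint n (stackSort^[((bk : Fin n) : ℕ)] (L ++ [n, 1])) ⟨n - 1 - k, hc⟩ = 1 := by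
            show ((stackSort^[k] (L ++ [n, 1])).getD (n - 1 - k) 0 : ℝ) = 1
            rw [coord_self n hn L hL k hk1]
            norm_num
          rw [hv, if_pos rfl]
          ring
        · rcases lt_trichotomy ((i : ℕ)) k with h | h | h
          · have hwi : w i = 0 := by
              have := ih (i : ℕ) h i.isLt (by omega)
              simpa using this
            simp [hwi]
          · exact absurd (Fin.ext h : i = bk) hik
          · have hv : toPoint n (stackSort^[((i : Fin n) : ℕ)] (L ++ [n, 1])) ⟨n - 1 - k, hc⟩ = C := by
              show ((stackSort^[(i : ℕ)] (L ++ [n, 1])).getD (n - 1 - k) 0 : ℝ) = C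
              rw [coord_later n hn L hL k (i : ℕ) h (by omega)]
            rw [hv, if_neg hik, add_zero]
      rw [Finset.sum_congr rfl (fun i _ => hterm i), Finset.sum_add_distrib,
        ← Finset.sum_mul, hw, zero_mul, zero_add,
        Finset.sum_ite_eq' Finset.univ bk (fun i => w i * (1 - C))] at h0
      simp only [Finset.mem_univ, if_pos] at h0
      have h2C : (2 : ℝ) ≤ C := by
        rw [hC]
        exact_mod_cast (by omega : (2 : ℕ) ≤ n - k)
      have hne : (1 : ℝ) - C ≠ 0 := by
        intro h; rw [sub_eq_zero] at h; linarith
      exact (mul_eq_zero.1 h0).resolve_right hne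
  intro i
  by_cases h : (i : ℕ) < n - 1
  · simpa using key (i : ℕ) i.isLt h
  · have hi : (i : ℕ) = n - 1 := by omega
    have hsum : (∑ b : Fin n, w b) = w i := by
      refine Finset.sum_eq_single i (fun b _ hb => ?_) (fun h => absurd (Finset.mem_univ i) h)
      have hb' : (b : ℕ) < n - 1 := by
        have hne : (b : ℕ) ≠ n - 1 := by
          intro hh
          exact hb (Fin.ext (by rw [hh, hi]))
        have := b.isLt
        omega
      simpa using key (b : ℕ) b.isLt hb'
    rw [hsum] at hw
    exact hw
end

section
/- Let n ≥ 2 and let △ₙ ⊂ ℝⁿ be the convex hull of the stack-sorting iterates of τₙ = 2 3 ⋯ (n−1) n 1. Then for every nonnegative integer t, the number of integer points in the t-th dilate of △ₙ is |t△ₙ ∩ ℤⁿ| = (t+1)^{n−1}. -/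
open scoped Pointwise

/-- The permutation `τₙ = 2 3 ⋯ (n-1) n 1`, as a list. -/
def tauList (n : ℕ) : List ℕ := List.range' 2 (n - 1) ++ [1]

/-- The point of `ℝⁿ` corresponding to `τₙ = 2 3 ⋯ (n-1) n 1`. -/
noncomputable def tauPt (n : ℕ) : Fin n → ℝ := toPoint n (tauList n)

/-- The set `𝒮^{τₙ} = {s⁰(τₙ), s¹(τₙ), …, s^{n-1}(τₙ)} ⊆ ℝⁿ` of
stack-sorting iterates of `τₙ`, regarded as points of `ℝⁿ`. -/
noncomputable def ssIterates (n : ℕ) : Set (Fin n → ℝ) :=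
  Set.range fun i : Fin n => toPoint n (stackSort^[(i : ℕ)] (tauList n))

/-- The simplex `△ₙ`: the convex hull of the stack-sorting iterates of
`τₙ = 2 3 ⋯ (n-1) n 1`. -/
noncomputable def ssSimplex (n : ℕ) : Set (Fin n → ℝ) :=
  convexHull ℝ (ssIterates n)

/-- `x ∈ ℝⁿ` is a lattice (integer) point if all its coordinates are integers. -/
def IsLatticePt {n : ℕ} (x : Fin n → ℝ) : Prop := ∀ i, ∃ z : ℤ, x i = (z : ℝ)

/-- The number of lattice points of a subset of `ℝⁿ`. -/
noncomputable def lattCount {n : ℕ} (S : Set (Fin n → ℝ)) : ℕ :=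
  Set.ncard {x ∈ S | IsLatticePt x}



open Finset

/-- Finset of "tails of chains": tuples `(P_m, …, P_{m+ℓ-1})` of naturals with
`(m-1)*P_m ≤ m*q`, `m*P_{m+1} ≤ (m+1)*P_m`, … -/
def chainsF : ℕ → ℕ → ℕ → Finset (List ℕ)
  | 0, _, _ => {[]}
  | (ℓ+1), m, q => (Finset.range (m*q/(m-1)+1)).biUnion
      fun p => (chainsF ℓ (m+1) p).image (p :: ·)

lemma length_of_mem_chainsF : ∀ (ℓ m q : ℕ) (L : List ℕ), L ∈ chainsF ℓ m q → L.length = ℓ := by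
  intro ℓ
  induction ℓ with
  | zero => intro m q L hL; simp [chainsF] at hL; simp [hL]
  | succ ℓ ih =>
    intro m q L hL
    simp only [chainsF, Finset.mem_biUnion, Finset.mem_image] at hL
    obtain ⟨p, _, T, hT, rfl⟩ := hL
    simp [ih _ _ _ hT]

lemma telescope_pow (L c : ℕ) (hL : L ≠ 0) :
    ∑ c' ∈ range c, ((c'+1)^L - c'^L) = c^L := by
  induction c with
  | zero => simp [Nat.zero_pow (Nat.pos_of_ne_zero hL)]
  | succ c ih =>
    rw [Finset.sum_range_succ, ih, Nat.add_sub_cancel' (Nat.pow_le_pow_left (Nat.le_succ c) L)]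

lemma sum_range_mul_split (f : ℕ → ℕ) (m c : ℕ) :
    ∑ p ∈ range (m*c), f p = ∑ c' ∈ range c, ∑ e' ∈ range m, f (m*c'+e') := by
  induction c with
  | zero => simp
  | succ c ih =>
    rw [Finset.sum_range_succ, ← ih, Nat.mul_succ, Finset.sum_range_add]

/-- binomial partial sum: `∑_{j ≤ ℓ} C(ℓ+1, j) c^j = (c+1)^{ℓ+1} - c^{ℓ+1}`. -/
lemma sum_choose_pow (ℓ c : ℕ) :
    ∑ j ∈ range (ℓ+1), (ℓ+1).choose j * c^j = (c+1)^(ℓ+1) - c^(ℓ+1) := by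
  have h : (c+1)^(ℓ+1) = ∑ j ∈ range (ℓ+2), c^j * 1^(ℓ+1-j) * (ℓ+1).choose j :=
    (Commute.all c 1).add_pow (ℓ+1)
  rw [Finset.sum_range_succ] at h
  simp only [one_pow, mul_one] at h
  have : (c+1)^(ℓ+1) = (∑ j ∈ range (ℓ+1), (ℓ+1).choose j * c^j) + c^(ℓ+1) := by
    rw [h, Nat.choose_self]; ring_nf
  omega

/-- Cardinality of `chainsF`. -/
lemma chainsF_card : ∀ (ℓ m q : ℕ), 2 ≤ m →
    (chainsF ℓ m q).card =
      ∑ j ∈ range (ℓ+1), (m+ℓ-1).choose j * ((q % (m-1)) + (ℓ-j)).choose (ℓ-j) * (q/(m-1))^j := by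
  intro ℓ
  induction ℓ with
  | zero => intro m q hm; simp [chainsF]
  | succ ℓ ih =>
    intro m q hm
    set c := q/(m-1) with hc
    set e := q % (m-1) with he
    have hq : (m-1)*c + e = q := Nat.div_add_mod q (m-1)
    have hem : e < m - 1 := Nat.mod_lt q (by omega)
    -- upper bound of first entry
    have hub : m*q/(m-1) = m*c + e := by
      have h2 : m*e = (m-1)*e + e := by
        cases m with
        | zero => omega
        | succ m' => simp [Nat.succ_sub_one, Nat.succ_mul]
      have : m*q = (m-1)*(m*c+e) + e := by
        rw [← hq]
        calc m * ((m-1)*c + e) = (m-1)*(m*c) + m*e := by ring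
        _ = (m-1)*(m*c) + ((m-1)*e + e) := by rw [h2]
        _ = (m-1)*(m*c+e) + e := by ring
      rw [this, Nat.mul_add_div (by omega), Nat.div_eq_of_lt (by omega), Nat.add_zero]
    -- cardinality as a sum
    have hcard : (chainsF (ℓ+1) m q).card = ∑ p ∈ range (m*c+e+1), (chainsF ℓ (m+1) p).card := by
      rw [chainsF, hub, Finset.card_biUnion]
      · exact Finset.sum_congr rfl fun p _ =>
          Finset.card_image_of_injective _ (fun a b hab => by injection hab)
      · intro x _ y _ hxy
        rw [Function.onFun, Finset.disjoint_left]
        rintro L hL hL'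
        simp only [Finset.mem_image] at hL hL'
        obtain ⟨T, _, rfl⟩ := hL
        obtain ⟨T', _, h⟩ := hL'
        exact hxy (by injection h.symm)
    rw [hcard]
    -- rewrite each inner card with ih
    have hrw : ∀ p, (chainsF ℓ (m+1) p).card =
        ∑ j ∈ range (ℓ+1), (m+ℓ).choose j * ((p % m) + (ℓ-j)).choose (ℓ-j) * (p/m)^j := by
      intro p
      have e1 : m+1+ℓ-1 = m+ℓ := by omega
      have e2 : m+1-1 = m := by omega
      rw [ih (m+1) p (by omega), e1, e2]
    simp only [hrw]
    -- split the sum  range (m*c + (e+1))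
    rw [show m*c+e+1 = m*c + (e+1) by ring, Finset.sum_range_add, sum_range_mul_split]
    have hmodl : ∀ c' e', e' < m → (m*c'+e') % m = e' ∧ (m*c'+e') / m = c' := by
      intro c' e' h
      constructor
      · rw [Nat.mul_add_mod]; exact Nat.mod_eq_of_lt h
      · rw [Nat.mul_add_div (by omega), Nat.div_eq_of_lt h, Nat.add_zero]
    -- first block
    have hblock1 : ∀ c' ∈ range c, ∑ e' ∈ range m,
        (∑ j ∈ range (ℓ+1), (m+ℓ).choose j * (((m*c'+e') % m) + (ℓ-j)).choose (ℓ-j) * ((m*c'+e')/m)^j)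
        = (m+ℓ).choose (ℓ+1) * ((c'+1)^(ℓ+1) - c'^(ℓ+1)) := by
      intro c' _
      have : ∀ e' ∈ range m, (∑ j ∈ range (ℓ+1),
          (m+ℓ).choose j * (((m*c'+e') % m) + (ℓ-j)).choose (ℓ-j) * ((m*c'+e')/m)^j)
          = ∑ j ∈ range (ℓ+1), (m+ℓ).choose j * (e' + (ℓ-j)).choose (ℓ-j) * c'^j := by
        intro e' he'
        rw [Finset.mem_range] at he'
        obtain ⟨h1, h2⟩ := hmodl c' e' he'
        simp [h1, h2]
      rw [Finset.sum_congr rfl this, Finset.sum_comm]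
      have hinner : ∀ j ∈ range (ℓ+1),
          ∑ e' ∈ range m, (m+ℓ).choose j * (e' + (ℓ-j)).choose (ℓ-j) * c'^j
          = (m+ℓ).choose (ℓ+1) * ((ℓ+1).choose j * c'^j) := by
        intro j hj
        rw [Finset.mem_range] at hj
        rw [← Finset.sum_mul, ← Finset.mul_sum]
        have hm1 : m = (m-1) + 1 := by omega
        have hhs : ∑ e' ∈ range m, (e' + (ℓ-j)).choose (ℓ-j) = (m+ℓ-j).choose (ℓ-j+1) := by
          rw [hm1, Nat.sum_range_add_choose]
          congr 1; omega
        rw [hhs]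
        -- trinomial revision: C(m+ℓ, j) * C(m+ℓ-j, ℓ+1-j) = C(m+ℓ, ℓ+1) * C(ℓ+1, j)
        have htri := Nat.choose_mul (n := m+ℓ) (k := ℓ+1) (s := j) (by omega)
        have h2 : ℓ-j+1 = ℓ+1-j := by omega
        rw [h2, ← htri, mul_assoc]
      rw [Finset.sum_congr rfl hinner, ← Finset.mul_sum, sum_choose_pow]
    rw [Finset.sum_congr rfl hblock1, ← Finset.mul_sum, telescope_pow _ _ (by omega)]
    -- second block
    have hblock2 : ∀ e' ∈ range (e+1),
        (∑ j ∈ range (ℓ+1), (m+ℓ).choose j * (((m*c+e') % m) + (ℓ-j)).choose (ℓ-j) * ((m*c+e')/m)^j)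
        = ∑ j ∈ range (ℓ+1), (m+ℓ).choose j * (e' + (ℓ-j)).choose (ℓ-j) * c^j := by
      intro e' he'
      rw [Finset.mem_range] at he'
      obtain ⟨h1, h2⟩ := hmodl c e' (by omega)
      simp [h1, h2]
    rw [Finset.sum_congr rfl hblock2, Finset.sum_comm]
    have hinner2 : ∀ j ∈ range (ℓ+1),
        ∑ e' ∈ range (e+1), (m+ℓ).choose j * (e' + (ℓ-j)).choose (ℓ-j) * c^j
        = (m+(ℓ+1)-1).choose j * (e + ((ℓ+1)-j)).choose ((ℓ+1)-j) * c^j := by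
      intro j hj
      rw [Finset.mem_range] at hj
      rw [← Finset.sum_mul, ← Finset.mul_sum, Nat.sum_range_add_choose]
      have : (e + (ℓ-j) + 1).choose ((ℓ-j)+1) = (e + ((ℓ+1)-j)).choose ((ℓ+1)-j) := by
        congr 1 <;> omega
      rw [this, show m+(ℓ+1)-1 = m+ℓ from by omega]
    rw [Finset.sum_congr rfl hinner2]
    -- combine: total = j=ℓ+1 term + Σ_{j≤ℓ}
    rw [Finset.sum_range_succ (n := ℓ+1)]
    have hlast : (m+(ℓ+1)-1).choose (ℓ+1) * (e + ((ℓ+1)-(ℓ+1))).choose ((ℓ+1)-(ℓ+1)) * c^(ℓ+1)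
        = (m+ℓ).choose (ℓ+1) * c^(ℓ+1) := by
      simp [show m+(ℓ+1)-1 = m+ℓ by omega]
    rw [hlast]
    ring

/-- The chain condition: `(m-1)*P_m ≤ m*q`, then recursively. -/
def isChain : ℕ → ℕ → List ℕ → Prop
  | _, _, [] => True
  | m, q, p :: T => (m-1)*p ≤ m*q ∧ isChain (m+1) p T

lemma mem_chainsF : ∀ (ℓ m q : ℕ), 2 ≤ m → ∀ L : List ℕ,
    (L ∈ chainsF ℓ m q ↔ L.length = ℓ ∧ isChain m q L) := by
  intro ℓ
  induction ℓ with
  | zero =>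
    intro m q hm L
    simp only [chainsF, Finset.mem_singleton, List.length_eq_zero_iff]
    constructor
    · rintro rfl; exact ⟨rfl, trivial⟩
    · rintro ⟨rfl, _⟩; rfl
  | succ ℓ ih =>
    intro m q hm L
    simp only [chainsF, Finset.mem_biUnion, Finset.mem_image, Finset.mem_range]
    constructor
    · rintro ⟨p, hp, T, hT, rfl⟩
      obtain ⟨hlen, hch⟩ := (ih (m+1) p (by omega) T).mp hT
      refine ⟨by simp [hlen], ?_, ?_⟩
      · have : p ≤ m*q/(m-1) := by omega
        have := (Nat.le_div_iff_mul_le (k := m-1) (by omega)).mp this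
        calc (m-1)*p = p*(m-1) := by ring
        _ ≤ m*q := this
      · exact hch
    · rintro ⟨hlen, hch⟩
      match L with
      | [] => simp at hlen
      | p :: T =>
        obtain ⟨h1, h2⟩ := hch
        refine ⟨p, ?_, T, ?_, rfl⟩
        · have : p*(m-1) ≤ m*q := by calc p*(m-1) = (m-1)*p := by ring
                                       _ ≤ m*q := h1
          have := (Nat.le_div_iff_mul_le (k := m-1) (by omega)).mpr this
          omega
        · exact (ih (m+1) p (by omega) T).mpr ⟨by simpa using hlen, h2⟩

/-- All chains `(P_1, …, P_{n-1})` with `P_1 ≤ t` etc. -/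
def allChains (n t : ℕ) : Finset (List ℕ) :=
  (Finset.range (t+1)).biUnion fun p => (chainsF (n-2) 2 p).image (p :: ·)

lemma mem_allChains (n t : ℕ) (L : List ℕ) :
    L ∈ allChains n t ↔ ∃ p T, L = p :: T ∧ p ≤ t ∧ T.length = n-2 ∧ isChain 2 p T := by
  simp only [allChains, Finset.mem_biUnion, Finset.mem_image, Finset.mem_range]
  constructor
  · rintro ⟨p, hp, T, hT, rfl⟩
    obtain ⟨hlen, hch⟩ := (mem_chainsF (n-2) 2 p (le_refl 2) T).mp hT
    exact ⟨p, T, rfl, by omega, hlen, hch⟩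
  · rintro ⟨p, T, rfl, hp, hlen, hch⟩
    exact ⟨p, by omega, T, (mem_chainsF (n-2) 2 p (le_refl 2) T).mpr ⟨hlen, hch⟩, rfl⟩

lemma allChains_card (n t : ℕ) (hn : 2 ≤ n) :
    (allChains n t).card = (t+1)^(n-1) := by
  rw [allChains, Finset.card_biUnion]
  · have hrw : ∀ p ∈ Finset.range (t+1),
        ((chainsF (n-2) 2 p).image (p :: ·)).card = (p+1)^(n-1) - p^(n-1) := by
      intro p _
      rw [Finset.card_image_of_injective _ (fun a b hab => by injection hab),
        chainsF_card (n-2) 2 p (le_refl 2)]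
      have h2 : (2:ℕ)-1 = 1 := rfl
      simp only [h2, Nat.mod_one, Nat.div_one, Nat.zero_add, Nat.choose_self, zero_add]
      have : ∀ j ∈ Finset.range (n-2+1),
          (2+(n-2)-1).choose j * 1 * p^j
          = ((n-2)+1).choose j * p^j := by
        intro j _
        rw [show 2+(n-2)-1 = (n-2)+1 by omega]
        ring
      rw [Finset.sum_congr rfl this, sum_choose_pow, show n-2+1 = n-1 by omega]
    rw [Finset.sum_congr rfl hrw]
    have ht : ∀ p ∈ Finset.range (t+1), (p+1)^(n-1) - p^(n-1) = ((p+1)^(n-1) - p^(n-1)) := fun _ _ => rfl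
    rw [telescope_pow (n-1) (t+1) (by omega)]
  · intro x _ y _ hxy
    rw [Function.onFun, Finset.disjoint_left]
    rintro L hL hL'
    simp only [Finset.mem_image] at hL hL'
    obtain ⟨T, _, rfl⟩ := hL
    obtain ⟨T', _, h⟩ := hL'
    exact hxy (by injection h.symm)





lemma ssAux_nil_nil : ssAux [] [] = [] := by rw [ssAux]
lemma ssAux_stack_nil (s : List ℕ) : ssAux s [] = s := by rw [ssAux]
lemma ssAux_nil_cons (x : ℕ) (xs : List ℕ) : ssAux [] (x :: xs) = ssAux [x] xs := by rw [ssAux]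
lemma ssAux_pop (t : ℕ) (ts : List ℕ) (x : ℕ) (xs : List ℕ) (h : t < x) :
    ssAux (t :: ts) (x :: xs) = t :: ssAux ts (x :: xs) := by rw [ssAux, if_pos h]
lemma ssAux_push (t : ℕ) (ts : List ℕ) (x : ℕ) (xs : List ℕ) (h : ¬ t < x) :
    ssAux (t :: ts) (x :: xs) = ssAux (x :: t :: ts) xs := by rw [ssAux, if_neg h]

lemma ssAux_run : ∀ (k a : ℕ) (l : List ℕ),
    ssAux [] (List.range' a (k+1) ++ l) = List.range' a k ++ ssAux [a+k] l := by
  intro k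
  induction k with
  | zero => intro a l; simp [List.range'_succ, ssAux_nil_cons]
  | succ k ih =>
    intro a l
    rw [List.range'_succ, List.cons_append, ssAux_nil_cons]
    have e2 : List.range' (a+1) (k+1) = (a+1) :: List.range' (a+1+1) k := List.range'_succ (step := 1)
    rw [e2, List.cons_append, ssAux_pop a [] (a+1) _ (by omega), ← List.cons_append, ← e2,
      ih (a+1) l]
    rw [List.range'_succ (s := a) (n := k) (step := 1), List.cons_append]
    have e3 : a+1+k = a+(k+1) := by omega
    rw [e3]

lemma ssAux_id (d : ℕ) : ∀ i, ssAux [] (List.range' d i) = List.range' d i := by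
  intro i
  match i with
  | 0 => simp [ssAux_nil_nil]
  | (i'+1) =>
    rw [show List.range' d (i'+1) = List.range' d (i'+1) ++ [] by simp] 
    rw [ssAux_run i' d [], ssAux_stack_nil]
    simp [List.range'_concat]

/-- the explicit form of the `i`-th stack-sorting iterate of `τₙ` -/
def wList (n i : ℕ) : List ℕ := List.range' 2 (n-1-i) ++ 1 :: List.range' (n-i+1) i

lemma tauList_eq_wList (n : ℕ) : tauList n = wList n 0 := by
  simp [tauList, wList]

lemma stackSort_wList (n i : ℕ) (hn : 2 ≤ n) (h : i ≤ n-2) :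
    stackSort (wList n i) = wList n (i+1) := by
  set k := n-1-i with hk
  have hk1 : 1 ≤ k := by omega
  have h1 : wList n i = List.range' 2 ((k-1)+1) ++ (1 :: List.range' (k+2) i) := by
    rw [wList, show (k-1)+1 = k by omega, show n-i+1 = k+2 by omega]
  rw [stackSort, h1, ssAux_run (k-1) 2 _, show 2+(k-1) = k+1 by omega]
  rw [ssAux_push (k+1) [] 1 _ (by omega)]
  have h2 : ssAux [1, k+1] (List.range' (k+2) i) = 1 :: (k+1) :: List.range' (k+2) i := by
    match i with
    | 0 => simp [ssAux_stack_nil]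
    | (i'+1) =>
      rw [List.range'_succ, ssAux_pop 1 [k+1] (k+2) _ (by omega),
        ssAux_pop (k+1) [] (k+2) _ (by omega), ← List.range'_succ, ssAux_id]
  rw [h2]
  have h3 : (k+1) :: List.range' (k+2) i = List.range' (k+1) (i+1) := by
    rw [List.range'_succ]
  rw [h3, wList, show n-1-(i+1) = k-1 by omega, show n-(i+1)+1 = k+1 by omega]

lemma iterate_stackSort_tauList (n : ℕ) (hn : 2 ≤ n) :
    ∀ i, i ≤ n-1 → stackSort^[i] (tauList n) = wList n i := by
  intro i
  induction i with
  | zero => intro _; simpa using (tauList_eq_wList n)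
  | succ i ih =>
    intro hi
    rw [Function.iterate_succ_apply', ih (by omega), stackSort_wList n i hn (by omega)]

/-- entries of `wList` -/
lemma wList_getD (n i j : ℕ) (hn : 2 ≤ n) (hi : i ≤ n-1) (hj : j < n) :
    (wList n i).getD j 0 =
      if j < n-1-i then j+2 else if j = n-1-i then 1 else j+1 := by
  set k := n-1-i with hk
  have hlen : (List.range' 2 k).length = k := List.length_range'
  by_cases h1 : j < k
  · rw [wList, List.getD_append _ _ _ _ (by rw [List.length_range']; omega), if_pos h1]
    rw [List.getD_eq_getElem?_getD, List.getElem?_range' (by omega)]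
    simp [Nat.two_mul]; omega
  · rw [wList, List.getD_append_right _ _ _ _ (by rw [List.length_range']; omega),
      List.length_range']
    by_cases h2 : j = k
    · rw [if_neg h1, if_pos h2, h2]
      simp [hk]
    · rw [if_neg h1, if_neg h2]
      have hjk : k + 1 ≤ j := by omega
      have : j - k = (j-k-1) + 1 := by omega
      rw [this]
      simp only [List.getD_cons_succ]
      rw [List.getD_eq_getElem?_getD, List.getElem?_range' (by omega)]
      simp; omega

-- geometry infrastructure
open Finset






/-- vertex coordinate function: `k` is position of the entry 1 -/
noncomputable def vvk (k j : ℕ) : ℝ := if j < k then (j:ℝ)+2 else if j = k then 1 else (j:ℝ)+1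

lemma vvk_expand (k j : ℕ) : vvk k j =
    ((j:ℝ)+1) + (if j < k then (1:ℝ) else 0) - (if j = k then (j:ℝ) else 0) := by
  unfold vvk
  by_cases h1 : j < k
  · rw [if_pos h1, if_pos h1, if_neg (by omega)]; ring
  · by_cases h2 : j = k
    · rw [if_neg h1, if_pos h2, if_neg h1, if_pos h2]; ring
    · rw [if_neg h1, if_neg h2, if_neg h1, if_neg h2]; ring

lemma vvk_sum (k m : ℕ) :
    ∑ j ∈ range m, vvk k j = (m:ℝ)*((m:ℝ)+1)/2 + (if m ≤ k then (m:ℝ) else 0) := by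
  induction m with
  | zero => simp
  | succ m ih =>
    rw [Finset.sum_range_succ, ih]
    by_cases h1 : m+1 ≤ k
    · rw [if_pos (by omega), if_pos h1, vvk, if_pos (by omega)]
      push_cast; ring
    · by_cases h2 : m = k
      · rw [if_pos (by omega), if_neg h1, vvk, if_neg (by omega), if_pos h2]
        push_cast; ring
      · rw [if_neg (by omega), if_neg h1, vvk, if_neg (by omega), if_neg h2]
        push_cast; ring

lemma toPoint_iterate (n : ℕ) (hn : 2 ≤ n) (i j : Fin n) :
    toPoint n (stackSort^[(i:ℕ)] (tauList n)) j = vvk (n-1-(i:ℕ)) (j:ℕ) := by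
  rw [toPoint, iterate_stackSort_tauList n hn (i:ℕ) (by omega),
    wList_getD n (i:ℕ) (j:ℕ) hn (by omega) (by omega)]
  unfold vvk
  by_cases h1 : (j:ℕ) < n-1-(i:ℕ)
  · rw [if_pos h1, if_pos h1]; push_cast; ring
  · by_cases h2 : (j:ℕ) = n-1-(i:ℕ)
    · rw [if_neg h1, if_pos h2, if_neg h1, if_pos h2]; norm_num
    · rw [if_neg h1, if_neg h2, if_neg h1, if_neg h2]; push_cast; ring

/-- Gauss sum in ℝ -/
lemma gauss_real (m : ℕ) : ∑ j ∈ range m, ((j:ℝ)+1) = (m:ℝ)*((m:ℝ)+1)/2 := by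
  induction m with
  | zero => simp
  | succ m ih => rw [Finset.sum_range_succ, ih]; push_cast; ring

def gaussN (m : ℕ) : ℕ := m*(m+1)/2

lemma gaussN_cast (m : ℕ) : ((gaussN m : ℕ) : ℝ) = (m:ℝ)*((m:ℝ)+1)/2 := by
  have h2 : 2 ∣ m*(m+1) := (Nat.even_mul_succ_self m).two_dvd
  have : (gaussN m) * 2 = m*(m+1) := Nat.div_mul_cancel h2
  have hc : ((gaussN m : ℕ):ℝ) * 2 = (m:ℝ)*((m:ℝ)+1) := by
    exact_mod_cast congrArg (Nat.cast : ℕ → ℝ) this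
  linarith

/-- `P` values of a chain list, as reals: `PPr L m = P_m` (with `P_0 = 0`). -/
noncomputable def PPr (L : List ℕ) (m : ℕ) : ℝ := if m = 0 then 0 else ((L.getD (m-1) 0 : ℕ) : ℝ)

/-- the lattice point associated to a chain list -/
noncomputable def psiPt (n t : ℕ) (L : List ℕ) : Fin n → ℝ :=
  fun j => (t:ℝ)*((j:ℕ)+1) + PPr L ((j:ℕ)+1) - PPr L (j:ℕ)

lemma psiPt_sum (n t : ℕ) (L : List ℕ) (m : ℕ) :
    ∑ j ∈ range m, ((t:ℝ)*((j:ℝ)+1) + PPr L (j+1) - PPr L j)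
      = (t:ℝ)*((m:ℝ)*((m:ℝ)+1)/2) + PPr L m := by
  have h1 : ∑ j ∈ range m, (PPr L (j+1) - PPr L j) = PPr L m - PPr L 0 :=
    Finset.sum_range_sub (PPr L) m
  have h2 : ∑ j ∈ range m, ((t:ℝ)*((j:ℝ)+1) + PPr L (j+1) - PPr L j)
      = ∑ j ∈ range m, ((t:ℝ)*((j:ℝ)+1)) + ∑ j ∈ range m, (PPr L (j+1) - PPr L j) := by
    rw [← Finset.sum_add_distrib]
    apply Finset.sum_congr rfl; intro j _; ring
  rw [h2, h1, ← Finset.mul_sum, gauss_real]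
  simp [PPr]

/-- telescoping over `Ico` -/
lemma telescope_Ico (g : ℕ → ℝ) (a b : ℕ) (hab : a ≤ b) :
    ∑ k ∈ Finset.Ico a b, (g k - g (k+1)) = g a - g b := by
  induction b, hab using Nat.le_induction with
  | base => simp
  | succ b hb ih => rw [Finset.sum_Ico_succ_top hb, ih]; ring


lemma chain_build (vals : ℕ → ℕ) : ∀ (len m : ℕ),
    (∀ j, m ≤ j → j < m + len → j*(vals (j+1)) ≤ (j+1)*(vals j)) →
    isChain (m+1) (vals m) (List.map (fun s => vals (s+m+1)) (List.range len)) := by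
  intro len
  induction len with
  | zero => intro m h; simp [isChain]
  | succ len ih =>
    intro m h
    rw [List.range_succ_eq_map, List.map_cons]
    refine ⟨?_, ?_⟩
    · have := h m (le_refl m) (by omega)
      simpa using this
    · have htail := ih (m+1) (fun j hj hj2 => h j (by omega) (by omega))
      rw [List.map_map]
      have : ((fun s => vals (s+m+1)) ∘ Nat.succ) = (fun s => vals (s+(m+1)+1)) := by
        funext s
        simp only [Function.comp_apply, Nat.succ_eq_add_one]
        congr 1
        omega
      rw [this]
      have e0 : (0:ℕ)+m+1 = m+1 := by omega
      rw [e0]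
      exact htail

lemma forward (n t : ℕ) (hn : 2 ≤ n) (x : Fin n → ℝ)
    (hx : x ∈ (t:ℝ) • ssSimplex n) (hlat : IsLatticePt x) :
    ∃ L ∈ allChains n t, x = psiPt n t L := by
  obtain ⟨z, hz, hxz⟩ := Set.mem_smul_set.mp hx
  rw [ssSimplex, _root_.convexHull_eq] at hz
  obtain ⟨ι, s, w, zf, hw0, hw1, hzs, hzc⟩ := hz
  have hvert : ∀ i : ι, ∃ k : ℕ, k ≤ n-1 ∧ (i ∈ s → ∀ j : Fin n, zf i j = vvk k (j:ℕ)) := by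
    intro i
    by_cases hi : i ∈ s
    · obtain ⟨a, ha⟩ := hzs i hi
      exact ⟨n-1-(a:ℕ), by omega, fun _ j => by rw [← ha]; exact toPoint_iterate n hn a j⟩
    · exact ⟨0, by omega, fun h => absurd h hi⟩
  choose kf hkf1 hkf2 using hvert
  have hzcoord : ∀ j : Fin n, z j = ∑ i ∈ s, w i * vvk (kf i) (j:ℕ) := by
    intro j
    rw [← hzc, Finset.centerMass_eq_of_sum_1 _ _ hw1, Finset.sum_apply]
    exact Finset.sum_congr rfl fun i hi => by rw [Pi.smul_apply, smul_eq_mul, hkf2 i hi j]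
  -- real data
  set U : ℕ → ℝ := fun m => ∑ i ∈ s, w i * (if m ≤ kf i then 1 else 0) with hU
  set xx : ℕ → ℝ := fun j => if h : j < n then x ⟨j,h⟩ else 0 with hxx
  have hxxj : ∀ j : Fin n, xx (j:ℕ) = x j := by
    intro j; rw [hxx]; simp
  have hxz' : ∀ j : Fin n, x j = (t:ℝ) * z j := by
    intro j; rw [← hxz]; simp
  have hxsum : ∀ m, m ≤ n →
      ∑ j ∈ Finset.range m, xx j = (t:ℝ)*((m:ℝ)*((m:ℝ)+1)/2) + (m:ℝ) * ((t:ℝ) * U m) := by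
    intro m hm
    have h1 : ∀ j ∈ Finset.range m, xx j = (t:ℝ) * ∑ i ∈ s, w i * vvk (kf i) j := by
      intro j hj
      rw [Finset.mem_range] at hj
      have hjn : j < n := by omega
      have : xx j = x ⟨j, hjn⟩ := by rw [hxx]; simp [hjn]
      rw [this, hxz' ⟨j, hjn⟩, hzcoord ⟨j, hjn⟩]
    rw [Finset.sum_congr rfl h1, ← Finset.mul_sum, Finset.sum_comm]
    have h2 : ∀ i ∈ s, ∑ j ∈ Finset.range m, w i * vvk (kf i) j
        = w i * ((m:ℝ)*((m:ℝ)+1)/2) + (m:ℝ) * (w i * (if m ≤ kf i then 1 else 0)) := by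
      intro i _
      rw [← Finset.mul_sum, vvk_sum]
      by_cases h : m ≤ kf i
      · rw [if_pos h, if_pos h]; ring
      · rw [if_neg h, if_neg h]; ring
    rw [Finset.sum_congr rfl h2, Finset.sum_add_distrib, ← Finset.sum_mul, hw1, ← Finset.mul_sum]
    simp only [hU]
    ring
  -- integer data
  have hXX : ∀ j : Fin n, ∃ a : ℤ, x j = (a:ℝ) := hlat
  set XX : ℕ → ℤ := fun j => if h : j < n then (hXX ⟨j,h⟩).choose else 0 with hXXdef
  have hXXspec : ∀ j, (XX j : ℝ) = xx j := by
    intro j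
    rw [hXXdef, hxx]
    by_cases h : j < n
    · simp only [dif_pos h]
      exact ((hXX ⟨j,h⟩).choose_spec).symm
    · simp [dif_neg h]
  set P : ℕ → ℤ := fun m => (∑ j ∈ Finset.range m, XX j) - (t:ℤ) * (gaussN m : ℤ) with hPdef
  have hPsum : ∀ m, (P m : ℝ) = (∑ j ∈ Finset.range m, xx j) - (t:ℝ)*((m:ℝ)*((m:ℝ)+1)/2) := by
    intro m
    rw [hPdef]
    push_cast
    rw [gaussN_cast]
    congr 1
    exact Finset.sum_congr rfl fun j _ => hXXspec j
  have hPr : ∀ m, m ≤ n → (P m : ℝ) = (m:ℝ) * ((t:ℝ) * U m) := by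
    intro m hm
    rw [hPsum, hxsum m hm]; ring
  -- facts about U
  have hw0' : ∀ i ∈ s, 0 ≤ w i := hw0
  have hU0 : ∀ m, 0 ≤ U m := by
    intro m
    apply Finset.sum_nonneg
    intro i hi
    have := hw0' i hi
    positivity
  have hUmono : ∀ m, U (m+1) ≤ U m := by
    intro m
    apply Finset.sum_le_sum
    intro i hi
    have hw := hw0' i hi
    by_cases h : m+1 ≤ kf i
    · rw [if_pos h, if_pos (by omega)]
    · rw [if_neg h]
      by_cases h2 : m ≤ kf i
      · rw [if_pos h2]; linarith
      · rw [if_neg h2]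
  have hU1 : U 1 ≤ 1 := by
    rw [← hw1, hU]
    apply Finset.sum_le_sum
    intro i hi
    have hw := hw0' i hi
    by_cases h : 1 ≤ kf i
    · rw [if_pos h]; linarith
    · rw [if_neg h]; linarith
  have hUn : U n = 0 := by
    rw [hU]
    apply Finset.sum_eq_zero
    intro i hi
    rw [if_neg (by have := hkf1 i; omega)]
    ring
  -- integer facts
  have hP0 : ∀ m, m ≤ n → 0 ≤ P m := by
    intro m hm
    have : (0:ℝ) ≤ (P m : ℝ) := by
      rw [hPr m hm]
      have := hU0 m
      positivity
    exact_mod_cast this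
  have hPt : P 1 ≤ (t:ℤ) := by
    have : (P 1 : ℝ) ≤ (t:ℝ) := by
      rw [hPr 1 (by omega)]
      have h1 := hU1
      have h0 := hU0 1
      have ht0 : (0:ℝ) ≤ (t:ℝ) := by positivity
      push_cast
      nlinarith [mul_le_mul_of_nonneg_left h1 ht0]
    exact_mod_cast this
  have hPchain : ∀ m, 1 ≤ m → m+1 ≤ n → (m:ℤ) * P (m+1) ≤ ((m:ℤ)+1) * P m := by
    intro m h1 h2
    have hr : (m:ℝ) * (P (m+1):ℝ) ≤ ((m:ℝ)+1) * (P m:ℝ) := by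
      rw [hPr (m+1) h2, hPr m (by omega)]
      have := hUmono m
      have ht0 : (0:ℝ) ≤ (t:ℝ) := by positivity
      have hm0 : (0:ℝ) ≤ (m:ℝ) := by positivity
      push_cast
      nlinarith [mul_le_mul_of_nonneg_left this
        (by positivity : (0:ℝ) ≤ (m:ℝ)*((m:ℝ)+1)*(t:ℝ))]
    exact_mod_cast hr
  have hPn : P n = 0 := by
    have : (P n : ℝ) = 0 := by rw [hPr n (le_refl n), hUn]; ring
    exact_mod_cast this
  -- build the list
  set vals : ℕ → ℕ := fun m => (P m).toNat with hvals
  have hvalsc : ∀ m, m ≤ n → (vals m : ℤ) = P m := by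
    intro m hm
    rw [hvals]
    exact Int.toNat_of_nonneg (hP0 m hm)
  set L : List ℕ := vals 1 :: List.map (fun s => vals (s+2)) (List.range (n-2)) with hLdef
  have hLlen : L.length = n-1 := by
    rw [hLdef]
    simp
    omega
  refine ⟨L, ?_, ?_⟩
  · rw [mem_allChains]
    refine ⟨vals 1, _, rfl, ?_, by simp, ?_⟩
    · have : (vals 1 : ℤ) ≤ (t:ℤ) := by rw [hvalsc 1 (by omega)]; exact hPt
      exact_mod_cast this
    · have hcb := chain_build vals (n-2) 1 ?_
      · have : (fun s => vals (s+1+1)) = (fun s => vals (s+2)) := by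
          funext s; congr 1
        rw [← this]
        exact hcb
      · intro j hj1 hj2
        have h := hPchain j hj1 (by omega)
        have hc1 := hvalsc (j+1) (by omega)
        have hc2 := hvalsc j (by omega)
        have : (j:ℤ) * (vals (j+1) : ℤ) ≤ ((j:ℤ)+1) * (vals j : ℤ) := by
          rw [hc1, hc2]; exact h
        exact_mod_cast this
  · -- x = psiPt n t L
    have hLget : ∀ s, s < n-1 → L.getD s 0 = vals (s+1) := by
      intro s hs
      match s with
      | 0 => simp only [hLdef, List.getD_cons_zero]
      | (s'+1) =>
        simp only [hLdef, List.getD_cons_succ]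
        have hlen : s' < (List.map (fun s => vals (s+2)) (List.range (n-2))).length := by
          simp; omega
        rw [List.getD_eq_getElem _ _ hlen, List.getElem_map, List.getElem_range]
    have hPPr : ∀ m, m ≤ n → PPr L m = (P m : ℝ) := by
      intro m hm
      match m with
      | 0 =>
        have : P 0 = 0 := by rw [hPdef]; simp [gaussN]
        rw [this, PPr]; simp
      | (m'+1) =>
        rw [PPr, if_neg (by omega)]
        simp only [Nat.add_sub_cancel]
        by_cases hm' : m' + 1 ≤ n-1
        · rw [hLget m' (by omega)]
          have hv := hvalsc (m'+1) (by omega)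
          rw [show ((vals (m'+1):ℕ):ℝ) = (((vals (m'+1)):ℤ):ℝ) by push_cast; ring, hv]
        · -- m'+1 = n : out of range, P n = 0
          have hmn : m'+1 = n := by omega
          have : L.getD m' 0 = 0 := by
            apply List.getD_eq_default
            omega
          rw [this, hmn, hPn]
          simp
    funext j
    rw [psiPt, ← hxxj j]
    have hj1 : (j:ℕ) + 1 ≤ n := by omega
    have e1 : ∑ j' ∈ Finset.range ((j:ℕ)+1), xx j' = (P ((j:ℕ)+1) : ℝ) + (t:ℝ)*((((j:ℕ)+1:ℕ):ℝ)*((((j:ℕ)+1:ℕ):ℝ)+1)/2) := by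
      rw [hPsum]; push_cast; ring
    have e2 : ∑ j' ∈ Finset.range (j:ℕ), xx j' = (P (j:ℕ) : ℝ) + (t:ℝ)*(((j:ℕ):ℝ)*(((j:ℕ):ℝ)+1)/2) := by
      rw [hPsum]; push_cast; ring
    have e3 : xx (j:ℕ) = ∑ j' ∈ Finset.range ((j:ℕ)+1), xx j' - ∑ j' ∈ Finset.range (j:ℕ), xx j' := by
      rw [Finset.sum_range_succ]; ring
    rw [e3, e1, e2, hPPr ((j:ℕ)+1) hj1, hPPr (j:ℕ) (by omega)]
    push_cast
    ring


lemma isChain_rel : ∀ (T : List ℕ) (m q : ℕ), isChain m q T →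
    ((m-1) * (T.getD 0 0) ≤ m * q ∧
      ∀ s, (m+s) * (T.getD (s+1) 0) ≤ (m+s+1) * (T.getD s 0)) := by
  intro T
  induction T with
  | nil => intro m q _; constructor <;> simp
  | cons p T' ih =>
    intro m q hch
    obtain ⟨h1, h2⟩ := hch
    obtain ⟨ih1, ih2⟩ := ih (m+1) p h2
    constructor
    · simpa using h1
    · intro s
      match s with
      | 0 =>
        simp only [List.getD_cons_succ, List.getD_cons_zero]
        simpa using ih1
      | (s'+1) =>
        simp only [List.getD_cons_succ]
        have := ih2 s'
        have e1 : m+(s'+1) = (m+1)+s' := by omega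
        rw [e1]
        exact this

/-- the `P` values of a chain list, as naturals -/
def PNf (L : List ℕ) (m : ℕ) : ℕ := if m = 0 then 0 else L.getD (m-1) 0

noncomputable def ff (L : List ℕ) (m : ℕ) : ℝ := (PNf L m : ℝ)/(m:ℝ)

noncomputable def nuf (L : List ℕ) (t k : ℕ) : ℝ :=
  if k = 0 then (t:ℝ) - (PNf L 1:ℝ) else ff L k - ff L (k+1)

lemma PPr_eq_PNf (L : List ℕ) (m : ℕ) : PPr L m = ((PNf L m : ℕ):ℝ) := by
  unfold PPr PNf
  split_ifs <;> simp

lemma backward (n t : ℕ) (hn : 2 ≤ n) (ht : 1 ≤ t) (L : List ℕ) (hL : L ∈ allChains n t) :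
    psiPt n t L ∈ (t:ℝ) • ssSimplex n ∧ IsLatticePt (psiPt n t L) := by
  obtain ⟨p, T, rfl, hp, hTlen, hch⟩ := (mem_allChains n t L).mp hL
  set L : List ℕ := p :: T with hLdef
  have hPN1 : PNf L 1 = p := by simp [PNf, hLdef]
  have hPNn : ∀ m, n ≤ m → PNf L m = 0 := by
    intro m hm
    rw [PNf, if_neg (by omega)]
    apply List.getD_eq_default
    rw [hLdef]
    simp
    omega
  obtain ⟨hrel1, hrel2⟩ := isChain_rel T 2 p hch
  have hrel : ∀ m, 1 ≤ m → m * PNf L (m+1) ≤ (m+1) * PNf L m := by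
    intro m hm
    have hL1 : PNf L (m+1) = T.getD (m-1) 0 := by
      rw [PNf, if_neg (by omega), hLdef]
      have e : m+1-1 = (m-1)+1 := by omega
      rw [e, List.getD_cons_succ]
    rw [hL1]
    by_cases hm1 : m = 1
    · subst hm1
      rw [hPN1]
      simpa using hrel1
    · have hL2 : PNf L m = T.getD (m-2) 0 := by
        rw [PNf, if_neg (by omega), hLdef]
        have e : m-1 = (m-2)+1 := by omega
        rw [e, List.getD_cons_succ]
      rw [hL2]
      have := hrel2 (m-2)
      have e1 : 2+(m-2) = m := by omega
      have e2 : (m-2)+1 = m-1 := by omega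
      rw [e1, e2] at this
      exact this
  -- real data
  have hnu0 : ∀ k, 0 ≤ nuf L t k := by
    intro k
    match k with
    | 0 =>
      rw [nuf, if_pos rfl, hPN1]
      have : (p:ℝ) ≤ (t:ℝ) := by exact_mod_cast hp
      linarith
    | (k'+1) =>
      rw [nuf, if_neg (by omega), ff, ff]
      rw [sub_nonneg, div_le_div_iff₀ (by positivity) (by positivity)]
      have h := hrel (k'+1) (by omega)
      have hc : (((k'+1):ℕ):ℝ) * ((PNf L (k'+1+1) : ℕ):ℝ) ≤ (((k'+1+1):ℕ):ℝ) * ((PNf L (k'+1):ℕ):ℝ) := by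
        exact_mod_cast h
      push_cast at hc ⊢
      nlinarith [hc]
  have hfn : ff L n = 0 := by
    rw [ff, hPNn n (le_refl n)]
    simp
  have hf1 : ff L 1 = (p:ℝ) := by
    rw [ff, hPN1]; simp
  have hnusum : ∑ k ∈ Finset.range n, nuf L t k = (t:ℝ) := by
    have hn' : n = (n-1)+1 := by omega
    rw [hn', Finset.sum_range_succ']
    have h1 : ∑ k ∈ Finset.range (n-1), nuf L t (k+1)
        = (fun s => ff L (s+1)) 0 - (fun s => ff L (s+1)) (n-1) := by
      rw [← Finset.sum_range_sub' (fun s => ff L (s+1)) (n-1)]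
      apply Finset.sum_congr rfl
      intro k _
      rw [nuf, if_neg (by omega)]
    rw [h1]
    have hnu00 : nuf L t 0 = (t:ℝ) - (p:ℝ) := by rw [nuf, if_pos rfl, hPN1]
    simp only [hnu00]
    have e1 : ff L (0+1) = (p:ℝ) := by norm_num [hf1]
    have e2 : ff L (n-1+1) = 0 := by rw [← hn']; exact hfn
    rw [e1, e2]
    ring
  -- the convex combination
  have ht0 : (0:ℝ) < t := by exact_mod_cast ht
  set μ : Fin n → ℝ := fun i => nuf L t (n-1-(i:ℕ)) / t with hμ
  have hμ0 : ∀ i : Fin n, 0 ≤ μ i := by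
    intro i
    have := hnu0 (n-1-(i:ℕ))
    rw [hμ]
    positivity
  have hμsum : ∑ i : Fin n, μ i = 1 := by
    rw [hμ]
    rw [← Finset.sum_div, Fin.sum_univ_eq_sum_range (fun k => nuf L t (n-1-k)) n,
      Finset.sum_range_reflect, hnusum]
    field_simp
  set vert : Fin n → (Fin n → ℝ) := fun i => toPoint n (stackSort^[(i:ℕ)] (tauList n)) with hvert
  set z : Fin n → ℝ := Finset.univ.centerMass μ vert with hz
  have hzmem : z ∈ ssSimplex n := by
    rw [hz, ssSimplex]
    apply Finset.centerMass_mem_convexHull _ (fun i _ => hμ0 i) (by rw [hμsum]; norm_num)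
    intro i _
    exact ⟨i, rfl⟩
  have hzeq : ∀ j : Fin n, (t:ℝ) * z j
      = (t:ℝ)*((j:ℕ)+1) + (PNf L ((j:ℕ)+1):ℝ) - (PNf L (j:ℕ):ℝ) := by
    intro j
    set jn := (j:ℕ) with hjn
    have hjlt : jn < n := j.isLt
    have hz1 : z j = ∑ i : Fin n, μ i * vvk (n-1-(i:ℕ)) jn := by
      rw [hz, Finset.centerMass_eq_of_sum_1 _ _ hμsum, Finset.sum_apply]
      apply Finset.sum_congr rfl
      intro i _
      rw [Pi.smul_apply, smul_eq_mul, hvert]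
      simp only
      rw [toPoint_iterate n hn i j]
    have hz2 : (t:ℝ) * z j = ∑ i : Fin n, nuf L t (n-1-(i:ℕ)) * vvk (n-1-(i:ℕ)) jn := by
      rw [hz1, Finset.mul_sum]
      apply Finset.sum_congr rfl
      intro i _
      rw [hμ]
      simp only
      field_simp
    have hz3 : (t:ℝ) * z j = ∑ k ∈ Finset.range n, nuf L t k * vvk k jn := by
      rw [hz2, Fin.sum_univ_eq_sum_range (fun k => nuf L t (n-1-k) * vvk (n-1-k) jn) n]
      exact Finset.sum_range_reflect (fun k => nuf L t k * vvk k jn) n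
    -- expand vvk
    have hterm : ∀ k, nuf L t k * vvk k jn =
        nuf L t k * ((jn:ℝ)+1) + (if jn < k then nuf L t k else 0)
          - (if k = jn then (jn:ℝ)*nuf L t k else 0) := by
      intro k
      rw [vvk_expand]
      by_cases h1 : jn < k
      · rw [if_pos h1, if_pos h1, if_neg (by omega), if_neg (by omega)]; ring
      · by_cases h2 : jn = k
        · rw [if_neg h1, if_pos h2, if_neg h1, if_pos h2.symm]; ring
        · rw [if_neg h1, if_neg h2, if_neg h1, if_neg (by omega)]; ring
    rw [Finset.sum_congr rfl (fun k _ => hterm k)] at hz3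
    rw [Finset.sum_sub_distrib, Finset.sum_add_distrib] at hz3
    have hS1 : ∑ k ∈ Finset.range n, nuf L t k * ((jn:ℝ)+1) = (t:ℝ)*((jn:ℝ)+1) := by
      rw [← Finset.sum_mul, hnusum]
    have hS3 : ∑ k ∈ Finset.range n, (if k = jn then (jn:ℝ)*nuf L t k else 0)
        = (jn:ℝ)*nuf L t jn := by
      rw [Finset.sum_ite_eq' (Finset.range n) jn (fun k => (jn:ℝ)*nuf L t k),
        if_pos (Finset.mem_range.mpr hjlt)]
    have hS2 : ∑ k ∈ Finset.range n, (if jn < k then nuf L t k else 0) = ff L (jn+1) := by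
      rw [Finset.range_eq_Ico, ← Finset.sum_Ico_consecutive _ (Nat.zero_le (jn+1)) (by omega)]
      have hz0 : ∑ k ∈ Finset.Ico 0 (jn+1), (if jn < k then nuf L t k else 0) = 0 := by
        apply Finset.sum_eq_zero
        intro k hk
        rw [Finset.mem_Ico] at hk
        rw [if_neg (by omega)]
      have hz4 : ∑ k ∈ Finset.Ico (jn+1) n, (if jn < k then nuf L t k else 0)
          = ∑ k ∈ Finset.Ico (jn+1) n, (ff L k - ff L (k+1)) := by
        apply Finset.sum_congr rfl
        intro k hk
        rw [Finset.mem_Ico] at hk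
        rw [if_pos (by omega), nuf, if_neg (by omega)]
      rw [hz0, hz4, telescope_Ico (ff L) (jn+1) n (by omega), hfn, zero_add]
      ring
    rw [hS1, hS2, hS3] at hz3
    rw [hz3]
    -- final algebra, two cases
    by_cases hj0 : jn = 0
    · rw [hj0]
      have e1 : ff L (0+1) = (p:ℝ) := by norm_num [hf1]
      have h0 : PNf L 0 = 0 := by rw [PNf, if_pos rfl]
      have h1 : PNf L (0+1) = p := hPN1
      rw [e1, h0, h1]
      push_cast
      ring
    · have hnu1 : nuf L t jn = ff L jn - ff L (jn+1) := by rw [nuf, if_neg hj0]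
      rw [hnu1, ff, ff]
      have hjnne : ((jn:ℕ):ℝ) ≠ 0 := by
        simp only [ne_eq, Nat.cast_eq_zero]; omega
      have hjn1ne : ((jn:ℕ):ℝ)+1 ≠ 0 := by positivity
      push_cast
      field_simp
      ring
  constructor
  · rw [Set.mem_smul_set]
    refine ⟨z, hzmem, ?_⟩
    funext j
    rw [Pi.smul_apply, smul_eq_mul, hzeq j, psiPt, PPr_eq_PNf, PPr_eq_PNf]
  · intro j
    refine ⟨(t:ℤ)*((j:ℕ)+1) + (PNf L ((j:ℕ)+1) : ℤ) - (PNf L (j:ℕ) : ℤ), ?_⟩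
    rw [psiPt, PPr_eq_PNf, PPr_eq_PNf]
    push_cast
    ring


lemma psiPt_injOn (n t : ℕ) (hn : 2 ≤ n) :
    Set.InjOn (psiPt n t) (allChains n t) := by
  intro L1 hL1 L2 hL2 heq
  rw [Finset.mem_coe, mem_allChains] at hL1 hL2
  obtain ⟨p1, T1, rfl, _, hlen1, _⟩ := hL1
  obtain ⟨p2, T2, rfl, _, hlen2, _⟩ := hL2
  have hlen1' : (p1 :: T1).length = n-1 := by simp [hlen1]; omega
  have hlen2' : (p2 :: T2).length = n-1 := by simp [hlen2]; omega
  have hPP : ∀ m, m ≤ n-1 → PPr (p1 :: T1) m = PPr (p2 :: T2) m := by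
    intro m
    induction m with
    | zero => intro _; rw [PPr, PPr]; simp
    | succ m ih =>
      intro hm
      have hmn : m < n := by omega
      have hj : ((⟨m, hmn⟩ : Fin n) : ℕ) = m := rfl
      have h1 := congrFun heq ⟨m, hmn⟩
      rw [psiPt, psiPt, hj] at h1
      have h2 := ih (by omega)
      have : PPr (p1 :: T1) (m+1) = PPr (p2 :: T2) (m+1) := by linarith
      exact this
  apply List.ext_getElem (by omega)
  intro s h1 h2
  have hs : s < n-1 := by omega
  have h := hPP (s+1) (by omega)
  rw [PPr, PPr, if_neg (by omega), if_neg (by omega)] at h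
  simp only [Nat.add_sub_cancel] at h
  rw [List.getD_eq_getElem _ _ h1, List.getD_eq_getElem _ _ h2] at h
  exact_mod_cast h

theorem ssSimplex_ehrhart' (n : ℕ) (hn : 2 ≤ n) (t : ℕ) :
    lattCount ((t : ℝ) • ssSimplex n) = (t + 1) ^ (n - 1) := by
  by_cases ht : t = 0
  · subst ht
    have hne : (ssSimplex n).Nonempty := by
      refine ⟨toPoint n (stackSort^[((⟨0, by omega⟩ : Fin n) : ℕ)] (tauList n)), ?_⟩
      exact subset_convexHull ℝ _ ⟨⟨0, by omega⟩, rfl⟩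
    have h0 : ((0:ℕ):ℝ) • ssSimplex n = 0 := by
      rw [Nat.cast_zero]
      exact Set.zero_smul_set hne
    rw [lattCount, h0]
    have : {x ∈ (0 : Set (Fin n → ℝ)) | IsLatticePt x} = {0} := by
      ext y
      simp only [Set.mem_setOf_eq, Set.mem_zero, Set.mem_singleton_iff]
      constructor
      · rintro ⟨h, _⟩; exact h
      · rintro rfl
        exact ⟨rfl, fun i => ⟨0, by simp⟩⟩
    rw [this, Set.ncard_singleton]
    simp
  · have ht1 : 1 ≤ t := by omega
    have key : {x ∈ (t:ℝ) • ssSimplex n | IsLatticePt x}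
        = ↑((allChains n t).image (psiPt n t)) := by
      ext x
      simp only [Set.mem_setOf_eq, Finset.coe_image, Set.mem_image, Finset.mem_coe]
      constructor
      · rintro ⟨hx, hlat⟩
        obtain ⟨L, hL, hxL⟩ := forward n t hn x hx hlat
        exact ⟨L, hL, hxL.symm⟩
      · rintro ⟨L, hL, rfl⟩
        obtain ⟨h1, h2⟩ := backward n t hn ht1 L hL
        exact ⟨h1, h2⟩
    rw [lattCount, key, Set.ncard_coe_finset, Finset.card_image_of_injOn (psiPt_injOn n t hn),
      allChains_card n t hn]

/-- For `n ≥ 2` and every nonnegative integer `t`, the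
number of integer points of the `t`-th dilate of
`△ₙ = conv{sⁱ(τₙ) : 0 ≤ i ≤ n-1}` is `(t+1)^{n-1}`. -/
theorem ssSimplex_ehrhart (n : ℕ) (hn : 2 ≤ n) (t : ℕ) :
    lattCount ((t : ℝ) • ssSimplex n) = (t + 1) ^ (n - 1) := by
  exact ssSimplex_ehrhart' n hn t
end
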